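/- arXiv:0705.0070 — 7 statements merged into one kernel-verified Lean document; each statement's English description precedes it below -/
import Mathlib

section
/- Let L be the free abelian group with basis H̄, Ē_1, Ē_2, Ē_3, Ē_4, and suppose D = d·H̄ − Σ_i m_i·Ē_i is a sum with nonnegative integer coefficients of the ten classes H̄ − Ē_i − Ē_j (1 ≤ i < j ≤ 4) and Ē_i (1 ≤ i ≤ 4). Then D can be written as a sum with nonnegative integer coefficients of the classes Ē_1, Ē_2, Ē_3, Ē_4 and the lines H̄ − Ē_i − Ē_j with {i,j} different from {1,2} and from {3,4}, if and only if d ≥ m_1 + m_2 and d ≥ m_3 + m_4. -/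
open Finset

abbrev G2 : Type := ℤ × (Fin 4 → ℤ)

/-- The hyperplane class `H̄`. -/
def Hb : G2 := (1, 0)

/-- The exceptional class `Ē_i`. -/
def Eb (i : Fin 4) : G2 := (0, Pi.single i 1)

/-- The class `H̄ - Ē_i - Ē_j` of the line through `q_i` and `q_j`. -/
def Lb (i j : Fin 4) : G2 := Hb - Eb i - Eb j

set_option maxHeartbeats 1000000 in
theorem stmt3 (d : ℤ) (m : Fin 4 → ℤ)
    (heff : ∃ (c : Fin 4 → Fin 4 → ℕ) (e : Fin 4 → ℕ),
      d • Hb - (∑ i : Fin 4, m i • Eb i)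
        = (∑ i : Fin 4, ∑ j : Fin 4, if i < j then (c i j : ℤ) • Lb i j else 0)
          + ∑ i : Fin 4, (e i : ℤ) • Eb i) :
    (∃ (c : Fin 4 → Fin 4 → ℕ) (e : Fin 4 → ℕ),
      d • Hb - (∑ i : Fin 4, m i • Eb i)
        = (∑ i : Fin 4, ∑ j : Fin 4,
            if i < j ∧ ¬(i = 0 ∧ j = 1) ∧ ¬(i = 2 ∧ j = 3) then (c i j : ℤ) • Lb i j else 0)
          + ∑ i : Fin 4, (e i : ℤ) • Eb i)
    ↔ (m 0 + m 1 ≤ d ∧ m 2 + m 3 ≤ d) := by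
  obtain ⟨c, e, h⟩ := heff
  have h1 := congrArg Prod.fst h
  have h2 := congrArg (fun p : G2 => p.2 0) h
  have h3 := congrArg (fun p : G2 => p.2 1) h
  have h4 := congrArg (fun p : G2 => p.2 2) h
  have h5 := congrArg (fun p : G2 => p.2 3) h
  simp only [Hb, Eb, Lb, Fin.sum_univ_four, Pi.single, Function.update] at h1 h2 h3 h4 h5
  simp at h1 h2 h3 h4 h5
  clear h
  constructor
  · rintro ⟨c', e', h⟩
    have g1 := congrArg Prod.fst h
    have g2 := congrArg (fun p : G2 => p.2 0) h
    have g3 := congrArg (fun p : G2 => p.2 1) h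
    have g4 := congrArg (fun p : G2 => p.2 2) h
    have g5 := congrArg (fun p : G2 => p.2 3) h
    simp only [Hb, Eb, Lb, Fin.sum_univ_four, Pi.single, Function.update] at g1 g2 g3 g4 g5
    simp at g1 g2 g3 g4 g5
    omega
  · rintro ⟨hA, hB⟩
    -- a0 := max (m 0) 0, a2 := max (m 2) 0, t := min a0 a2
    obtain ⟨x02, x03, x12, x13, f0, f1, f2, f3, k1, k2, k3, k4, k5⟩ :
        ∃ x02 x03 x12 x13 f0 f1 f2 f3 : ℕ,
          d = (x02 : ℤ) + x03 + x12 + x13 ∧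
          m 0 = (x02 : ℤ) + x03 - f0 ∧
          m 1 = (x12 : ℤ) + x13 - f1 ∧
          m 2 = (x02 : ℤ) + x12 - f2 ∧
          m 3 = (x03 : ℤ) + x13 - f3 := by
      refine ⟨(min (max (m 0) 0) (max (m 2) 0)).toNat,
        (max (m 0) 0 - min (max (m 0) 0) (max (m 2) 0)).toNat,
        (max (m 2) 0 - min (max (m 0) 0) (max (m 2) 0)).toNat,
        (d - max (m 0) 0 - max (m 2) 0 + min (max (m 0) 0) (max (m 2) 0)).toNat,
        (max (m 0) 0 - m 0).toNat, (d - max (m 0) 0 - m 1).toNat,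
        (max (m 2) 0 - m 2).toNat, (d - max (m 2) 0 - m 3).toNat, ?_, ?_, ?_, ?_, ?_⟩ <;> omega
    refine ⟨![![0, 0, x02, x03], ![0, 0, x12, x13], ![0, 0, 0, 0], ![0, 0, 0, 0]],
            ![f0, f1, f2, f3], ?_⟩
    refine Prod.ext ?_ (funext fun i => ?_)
    · simp only [Hb, Eb, Lb, Fin.sum_univ_four, Pi.single, Function.update]
      simp
      omega
    · fin_cases i <;>
      · simp only [Hb, Eb, Lb, Fin.sum_univ_four, Pi.single, Function.update]
        simp
        omega
end

section
/- Let d, m_1,…,m_5 and m_{ij} = m_{ji} (1 ≤ i < j ≤ 5) be integers satisfying the boundary-restriction inequalities and also d ≥ m_{ab} + m_{cd} for each partition {a,b} ∪ {c,d} = {1,2,3,4}. Set m_x := max(0, m_5 + m_{13} + m_{24} − d), m_y := max(0, m_5 + m_{14} + m_{23} − d), m_z := max(0, m_5 + m_{12} + m_{34} − d). Then m_x + m_y + m_z ≤ m_5. -/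
open Finset

/-- The boundary-restriction inequalities for divisor data
`D = d·H - ∑ m_i·E_i - ∑_{i<j} m_{ij}·E_{ij}` on the Kapranov model of `M̄_{0,6}`:
the restriction of `D` to every boundary divisor and every Keel–Vermeire divisor is
effective.  (The paper's indices `1,…,5` are `0,…,4` here.) -/
def BR (d : ℤ) (m : Fin 5 → ℤ) (mm : Fin 5 → Fin 5 → ℤ) : Prop :=
  ∀ i j k l u : Fin 5,
    i ≠ j → i ≠ k → i ≠ l → i ≠ u → j ≠ k → j ≠ l → j ≠ u → k ≠ l → k ≠ u → l ≠ u →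
    0 ≤ m i ∧ mm i j ≤ m i ∧
    (∑ p ∈ Finset.univ.filter (fun p => p ≠ i), mm i p) ≤ 2 * m i ∧
    0 ≤ mm i j ∧ 0 ≤ d - m i - m j + mm i j ∧ m i + mm j k ≤ d ∧
    mm i j + mm i k + mm j k + mm l u ≤ d ∧ m i + m j + m k + mm l u ≤ 2 * d ∧
    m u + mm i k + mm i l + mm j k + mm j l ≤ 2 * d ∧
    m i + m u + mm j k + mm j l ≤ 2 * d

theorem stmt6 (d : ℤ) (m : Fin 5 → ℤ) (mm : Fin 5 → Fin 5 → ℤ)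
    (hsym : ∀ i j, mm i j = mm j i) (hBR : BR d m mm)
    (hnef : ∀ p q r s : Fin 5, p ≠ q → p ≠ r → p ≠ s → q ≠ r → q ≠ s → r ≠ s →
      p ≠ 4 → q ≠ 4 → r ≠ 4 → s ≠ 4 → mm p q + mm r s ≤ d) :
    max 0 (m 4 + mm 0 2 + mm 1 3 - d) + max 0 (m 4 + mm 0 3 + mm 1 2 - d)
      + max 0 (m 4 + mm 0 1 + mm 2 3 - d) ≤ m 4 := by
  -- row-sum inequality at index 3
  have h1 : mm 3 0 + mm 3 1 + mm 3 2 + mm 3 4 ≤ 2 * m 3 := by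
    have := (hBR 3 0 1 2 4 (by decide) (by decide) (by decide) (by decide) (by decide)
      (by decide) (by decide) (by decide) (by decide) (by decide)).2.2.1
    simpa [Finset.sum_filter, Fin.sum_univ_five] using this
  -- m 3 + m 4 - mm 3 4 ≤ d
  have h2 := (hBR 3 4 0 1 2 (by decide) (by decide) (by decide) (by decide) (by decide)
      (by decide) (by decide) (by decide) (by decide) (by decide)).2.2.2.2.1
  -- triangle: mm01 + mm02 + mm12 + mm34 ≤ d
  have h3 := (hBR 0 1 2 3 4 (by decide) (by decide) (by decide) (by decide) (by decide)
      (by decide) (by decide) (by decide) (by decide) (by decide)).2.2.2.2.2.2.1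
  -- Keel–Vermeire at u = 4, three partitions
  have k1 := (hBR 0 1 2 3 4 (by decide) (by decide) (by decide) (by decide) (by decide)
      (by decide) (by decide) (by decide) (by decide) (by decide)).2.2.2.2.2.2.2.2.1
  have k2 := (hBR 0 2 1 3 4 (by decide) (by decide) (by decide) (by decide) (by decide)
      (by decide) (by decide) (by decide) (by decide) (by decide)).2.2.2.2.2.2.2.2.1
  have k3 := (hBR 0 3 1 2 4 (by decide) (by decide) (by decide) (by decide) (by decide)
      (by decide) (by decide) (by decide) (by decide) (by decide)).2.2.2.2.2.2.2.2.1
  -- nef curve classes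
  have n1 := hnef 0 2 1 3 (by decide) (by decide) (by decide) (by decide) (by decide)
      (by decide) (by decide) (by decide) (by decide) (by decide)
  have n2 := hnef 0 3 1 2 (by decide) (by decide) (by decide) (by decide) (by decide)
      (by decide) (by decide) (by decide) (by decide) (by decide)
  have n3 := hnef 0 1 2 3 (by decide) (by decide) (by decide) (by decide) (by decide)
      (by decide) (by decide) (by decide) (by decide) (by decide)
  have hm4 := (hBR 4 0 1 2 3 (by decide) (by decide) (by decide) (by decide) (by decide)
      (by decide) (by decide) (by decide) (by decide) (by decide)).1
  have s01 : mm 0 1 = mm 1 0 := hsym 0 1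
  have s02 : mm 0 2 = mm 2 0 := hsym 0 2
  have s03 : mm 0 3 = mm 3 0 := hsym 0 3
  have s12 : mm 1 2 = mm 2 1 := hsym 1 2
  have s13 : mm 1 3 = mm 3 1 := hsym 1 3
  have s23 : mm 2 3 = mm 3 2 := hsym 2 3
  have s34 : mm 3 4 = mm 4 3 := hsym 3 4
  omega
end

section
/- Let d, m_1,…,m_5 and m_{ij} = m_{ji} (1 ≤ i < j ≤ 5) be integers satisfying the boundary-restriction inequalities, with d > 0, with m_5 ≤ m_i for i = 1,2,3,4, and such that if m_1 = m_2 = m_3 = m_4 = m_5 then there is some i ≤ 4 with m_{i5} ≥ m_{ab} for all 1 ≤ a < b ≤ 5. Then 2m_5 + m_{12} + m_{13} + m_{14} + m_{23} + m_{24} + m_{34} < 3d. (Equivalently, −(D·L_x + D·L_y + D·L_z) < m_5, where D·L_x = d − m_5 − m_{13} − m_{24}, D·L_y = d − m_5 − m_{14} − m_{23}, D·L_z = d − m_5 − m_{12} − m_{34}.) -/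
open Finset

theorem stmt7 (d : ℤ) (m : Fin 5 → ℤ) (mm : Fin 5 → Fin 5 → ℤ)
    (hsym : ∀ i j, mm i j = mm j i) (hBR : BR d m mm)
    (hd : 0 < d)
    (hm5 : ∀ p : Fin 5, p ≠ 4 → m 4 ≤ m p)
    (hnorm : (m 0 = m 4 ∧ m 1 = m 4 ∧ m 2 = m 4 ∧ m 3 = m 4) →
      ∃ i : Fin 5, i ≠ 4 ∧ ∀ p q : Fin 5, p ≠ q → mm p q ≤ mm i 4) :
    2 * m 4 + mm 0 1 + mm 0 2 + mm 0 3 + mm 1 2 + mm 1 3 + mm 2 3 < 3 * d := by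
  have s0 : mm 0 1 + mm 0 2 + mm 0 3 + mm 0 4 ≤ 2 * m 0 := by
    have h := (hBR 0 1 2 3 4 (by decide) (by decide) (by decide) (by decide) (by decide) (by decide) (by decide) (by decide) (by decide) (by decide)).2.2.1
    simpa [Finset.sum_filter, Fin.sum_univ_five] using h
  have s1 : mm 1 0 + mm 1 2 + mm 1 3 + mm 1 4 ≤ 2 * m 1 := by
    have h := (hBR 1 0 2 3 4 (by decide) (by decide) (by decide) (by decide) (by decide) (by decide) (by decide) (by decide) (by decide) (by decide)).2.2.1
    simpa [Finset.sum_filter, Fin.sum_univ_five] using h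
  have s2 : mm 2 0 + mm 2 1 + mm 2 3 + mm 2 4 ≤ 2 * m 2 := by
    have h := (hBR 2 0 1 3 4 (by decide) (by decide) (by decide) (by decide) (by decide) (by decide) (by decide) (by decide) (by decide) (by decide)).2.2.1
    simpa [Finset.sum_filter, Fin.sum_univ_five] using h
  have s3 : mm 3 0 + mm 3 1 + mm 3 2 + mm 3 4 ≤ 2 * m 3 := by
    have h := (hBR 3 0 1 2 4 (by decide) (by decide) (by decide) (by decide) (by decide) (by decide) (by decide) (by decide) (by decide) (by decide)).2.2.1
    simpa [Finset.sum_filter, Fin.sum_univ_five] using h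
  have s4 : mm 4 0 + mm 4 1 + mm 4 2 + mm 4 3 ≤ 2 * m 4 := by
    have h := (hBR 4 0 1 2 3 (by decide) (by decide) (by decide) (by decide) (by decide) (by decide) (by decide) (by decide) (by decide) (by decide)).2.2.1
    simpa [Finset.sum_filter, Fin.sum_univ_five] using h
  have e01 := hsym 1 0
  have e02 := hsym 2 0
  have e03 := hsym 3 0
  have e04 := hsym 4 0
  have e12 := hsym 2 1
  have e13 := hsym 3 1
  have e14 := hsym 4 1
  have e23 := hsym 3 2
  have e24 := hsym 4 2
  have e34 := hsym 4 3
  have H0 := hBR 0 1 2 3 4 (by decide) (by decide) (by decide) (by decide) (by decide) (by decide) (by decide) (by decide) (by decide) (by decide)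
  have c0 := H0.1
  have c1 := H0.2.2.2.1
  have c2 := H0.2.2.2.2.1
  have c3 := H0.2.2.2.2.2.2.1
  have c4 := H0.2.2.2.2.2.2.2.1
  clear H0
  have H1 := hBR 0 1 3 2 4 (by decide) (by decide) (by decide) (by decide) (by decide) (by decide) (by decide) (by decide) (by decide) (by decide)
  have c5 := H1.2.2.2.2.2.2.1
  have c6 := H1.2.2.2.2.2.2.2.1
  clear H1
  have H2 := hBR 0 1 4 2 3 (by decide) (by decide) (by decide) (by decide) (by decide) (by decide) (by decide) (by decide) (by decide) (by decide)
  have c7 := H2.2.2.2.2.2.2.1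
  have c8 := H2.2.2.2.2.2.2.2.1
  clear H2
  have H3 := hBR 0 2 1 3 4 (by decide) (by decide) (by decide) (by decide) (by decide) (by decide) (by decide) (by decide) (by decide) (by decide)
  have c9 := H3.2.2.2.1
  have c10 := H3.2.2.2.2.1
  clear H3
  have H4 := hBR 0 2 3 1 4 (by decide) (by decide) (by decide) (by decide) (by decide) (by decide) (by decide) (by decide) (by decide) (by decide)
  have c11 := H4.2.2.2.2.2.2.1
  have c12 := H4.2.2.2.2.2.2.2.1
  clear H4
  have H5 := hBR 0 2 4 1 3 (by decide) (by decide) (by decide) (by decide) (by decide) (by decide) (by decide) (by decide) (by decide) (by decide)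
  have c13 := H5.2.2.2.2.2.2.1
  have c14 := H5.2.2.2.2.2.2.2.1
  clear H5
  have H6 := hBR 0 3 1 2 4 (by decide) (by decide) (by decide) (by decide) (by decide) (by decide) (by decide) (by decide) (by decide) (by decide)
  have c15 := H6.2.2.2.1
  have c16 := H6.2.2.2.2.1
  clear H6
  have H7 := hBR 0 3 4 1 2 (by decide) (by decide) (by decide) (by decide) (by decide) (by decide) (by decide) (by decide) (by decide) (by decide)
  have c17 := H7.2.2.2.2.2.2.1
  have c18 := H7.2.2.2.2.2.2.2.1
  clear H7
  have H8 := hBR 0 4 1 2 3 (by decide) (by decide) (by decide) (by decide) (by decide) (by decide) (by decide) (by decide) (by decide) (by decide)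
  have c19 := H8.2.2.2.1
  have c20 := H8.2.2.2.2.1
  clear H8
  have H9 := hBR 1 0 2 3 4 (by decide) (by decide) (by decide) (by decide) (by decide) (by decide) (by decide) (by decide) (by decide) (by decide)
  have c21 := H9.1
  have c22 := H9.2.2.2.2.1
  clear H9
  have H10 := hBR 1 2 0 3 4 (by decide) (by decide) (by decide) (by decide) (by decide) (by decide) (by decide) (by decide) (by decide) (by decide)
  have c23 := H10.2.2.2.1
  have c24 := H10.2.2.2.2.1
  clear H10
  have H11 := hBR 1 2 3 0 4 (by decide) (by decide) (by decide) (by decide) (by decide) (by decide) (by decide) (by decide) (by decide) (by decide)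
  have c25 := H11.2.2.2.2.2.2.1
  have c26 := H11.2.2.2.2.2.2.2.1
  clear H11
  have H12 := hBR 1 2 4 0 3 (by decide) (by decide) (by decide) (by decide) (by decide) (by decide) (by decide) (by decide) (by decide) (by decide)
  have c27 := H12.2.2.2.2.2.2.1
  have c28 := H12.2.2.2.2.2.2.2.1
  clear H12
  have H13 := hBR 1 3 0 2 4 (by decide) (by decide) (by decide) (by decide) (by decide) (by decide) (by decide) (by decide) (by decide) (by decide)
  have c29 := H13.2.2.2.1
  have c30 := H13.2.2.2.2.1
  clear H13
  have H14 := hBR 1 3 4 0 2 (by decide) (by decide) (by decide) (by decide) (by decide) (by decide) (by decide) (by decide) (by decide) (by decide)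
  have c31 := H14.2.2.2.2.2.2.1
  have c32 := H14.2.2.2.2.2.2.2.1
  clear H14
  have H15 := hBR 1 4 0 2 3 (by decide) (by decide) (by decide) (by decide) (by decide) (by decide) (by decide) (by decide) (by decide) (by decide)
  have c33 := H15.2.2.2.1
  have c34 := H15.2.2.2.2.1
  clear H15
  have H16 := hBR 2 0 1 3 4 (by decide) (by decide) (by decide) (by decide) (by decide) (by decide) (by decide) (by decide) (by decide) (by decide)
  have c35 := H16.1
  have c36 := H16.2.2.2.2.1
  clear H16
  have H17 := hBR 2 1 0 3 4 (by decide) (by decide) (by decide) (by decide) (by decide) (by decide) (by decide) (by decide) (by decide) (by decide)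
  have c37 := H17.2.2.2.2.1
  clear H17
  have H18 := hBR 2 3 0 1 4 (by decide) (by decide) (by decide) (by decide) (by decide) (by decide) (by decide) (by decide) (by decide) (by decide)
  have c38 := H18.2.2.2.1
  have c39 := H18.2.2.2.2.1
  clear H18
  have H19 := hBR 2 3 4 0 1 (by decide) (by decide) (by decide) (by decide) (by decide) (by decide) (by decide) (by decide) (by decide) (by decide)
  have c40 := H19.2.2.2.2.2.2.1
  have c41 := H19.2.2.2.2.2.2.2.1
  clear H19
  have H20 := hBR 2 4 0 1 3 (by decide) (by decide) (by decide) (by decide) (by decide) (by decide) (by decide) (by decide) (by decide) (by decide)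
  have c42 := H20.2.2.2.1
  have c43 := H20.2.2.2.2.1
  clear H20
  have H21 := hBR 3 0 1 2 4 (by decide) (by decide) (by decide) (by decide) (by decide) (by decide) (by decide) (by decide) (by decide) (by decide)
  have c44 := H21.1
  have c45 := H21.2.2.2.2.1
  clear H21
  have H22 := hBR 3 1 0 2 4 (by decide) (by decide) (by decide) (by decide) (by decide) (by decide) (by decide) (by decide) (by decide) (by decide)
  have c46 := H22.2.2.2.2.1
  clear H22
  have H23 := hBR 3 2 0 1 4 (by decide) (by decide) (by decide) (by decide) (by decide) (by decide) (by decide) (by decide) (by decide) (by decide)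
  have c47 := H23.2.2.2.2.1
  clear H23
  have H24 := hBR 3 4 0 1 2 (by decide) (by decide) (by decide) (by decide) (by decide) (by decide) (by decide) (by decide) (by decide) (by decide)
  have c48 := H24.2.2.2.1
  have c49 := H24.2.2.2.2.1
  clear H24
  have H25 := hBR 4 0 1 2 3 (by decide) (by decide) (by decide) (by decide) (by decide) (by decide) (by decide) (by decide) (by decide) (by decide)
  have c50 := H25.1
  have c51 := H25.2.2.2.2.1
  clear H25
  have H26 := hBR 4 1 0 2 3 (by decide) (by decide) (by decide) (by decide) (by decide) (by decide) (by decide) (by decide) (by decide) (by decide)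
  have c52 := H26.2.2.2.2.1
  clear H26
  have H27 := hBR 4 2 0 1 3 (by decide) (by decide) (by decide) (by decide) (by decide) (by decide) (by decide) (by decide) (by decide) (by decide)
  have c53 := H27.2.2.2.2.1
  clear H27
  have H28 := hBR 4 3 0 1 2 (by decide) (by decide) (by decide) (by decide) (by decide) (by decide) (by decide) (by decide) (by decide) (by decide)
  have c54 := H28.2.2.2.2.1
  clear H28
  have g0 := hm5 0 (by decide)
  have g1 := hm5 1 (by decide)
  have g2 := hm5 2 (by decide)
  have g3 := hm5 3 (by decide)
  by_cases hc : m 0 = m 4 ∧ m 1 = m 4 ∧ m 2 = m 4 ∧ m 3 = m 4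
  · obtain ⟨i, hi, hx⟩ := hnorm hc
    obtain ⟨q0, q1, q2, q3⟩ := hc
    have hv : i = 0 ∨ i = 1 ∨ i = 2 ∨ i = 3 := by
      revert hi; fin_cases i <;> decide
    rcases hv with rfl | rfl | rfl | rfl
    all_goals (
      have x01 := hx 0 1 (by decide)
      have x02 := hx 0 2 (by decide)
      have x03 := hx 0 3 (by decide)
      have x04 := hx 0 4 (by decide)
      have x10 := hx 1 0 (by decide)
      have x12 := hx 1 2 (by decide)
      have x13 := hx 1 3 (by decide)
      have x14 := hx 1 4 (by decide)
      have x20 := hx 2 0 (by decide)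
      have x21 := hx 2 1 (by decide)
      have x23 := hx 2 3 (by decide)
      have x24 := hx 2 4 (by decide)
      have x30 := hx 3 0 (by decide)
      have x31 := hx 3 1 (by decide)
      have x32 := hx 3 2 (by decide)
      have x34 := hx 3 4 (by decide)
      have x40 := hx 4 0 (by decide)
      have x41 := hx 4 1 (by decide)
      have x42 := hx 4 2 (by decide)
      have x43 := hx 4 3 (by decide)
      clear hx hBR hsym hm5 hnorm
      linarith)
  · have hne : m 4 < m 0 ∨ m 4 < m 1 ∨ m 4 < m 2 ∨ m 4 < m 3 := by
      rcases not_and_or.1 hc with h | h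
      · exact Or.inl (lt_of_le_of_ne g0 (Ne.symm h))
      rcases not_and_or.1 h with h | h
      · exact Or.inr (Or.inl (lt_of_le_of_ne g1 (Ne.symm h)))
      rcases not_and_or.1 h with h | h
      · exact Or.inr (Or.inr (Or.inl (lt_of_le_of_ne g2 (Ne.symm h))))
      · exact Or.inr (Or.inr (Or.inr (lt_of_le_of_ne g3 (Ne.symm h))))
    clear hBR hsym hm5 hnorm hc
    rcases hne with h | h | h | h <;> linarith
end

section
/- Let d, m_1,…,m_5 and m_{ij} = m_{ji} (1 ≤ i < j ≤ 5) be integers satisfying the boundary-restriction inequalities, and let a_{pq} = a_{qp} (1 ≤ p < q ≤ 4) and l_1,…,l_4 be nonnegative integers with Σ_{1≤p<q≤4} a_{pq} = m_5 and a_{pq} + a_{pr} + a_{ps} − l_p = m_{p5} for each p ∈ {1,2,3,4} (where {q,r,s} = {1,2,3,4}∖{p}). If a_{12} > 2d − m_{13} − m_{23} − m_4 − m_5, then a_{34} > 0 or l_1 + l_2 > 0. -/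
open Finset

theorem stmt10 (d : ℤ) (m : Fin 5 → ℤ) (mm : Fin 5 → Fin 5 → ℤ)
    (hsym : ∀ i j, mm i j = mm j i) (hBR : BR d m mm)
    (a : Fin 5 → Fin 5 → ℤ) (ll : Fin 5 → ℤ)
    (hasym : ∀ p q, a p q = a q p)
    (hapos : ∀ p q, 0 ≤ a p q) (hlpos : ∀ p, 0 ≤ ll p)
    (hsum : a 0 1 + a 0 2 + a 0 3 + a 1 2 + a 1 3 + a 2 3 = m 4)
    (hrel : ∀ p q r s : Fin 5, p ≠ q → p ≠ r → p ≠ s → q ≠ r → q ≠ s → r ≠ s →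
      p ≠ 4 → q ≠ 4 → r ≠ 4 → s ≠ 4 → a p q + a p r + a p s - ll p = mm p 4)
    :
    2 * d - mm 0 2 - mm 1 2 - m 3 - m 4 < a 0 1 → 0 < a 2 3 ∨ 0 < ll 0 + ll 1 := by
  intro hlt
  by_contra h
  push_neg at h
  obtain ⟨h1, h2⟩ := h
  have h0 := hrel 0 1 2 3 (by decide) (by decide) (by decide) (by decide) (by decide)
    (by decide) (by decide) (by decide) (by decide) (by decide)
  have h1' := hrel 1 0 2 3 (by decide) (by decide) (by decide) (by decide) (by decide)
    (by decide) (by decide) (by decide) (by decide) (by decide)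
  have hBR' := hBR 0 1 2 4 3 (by decide) (by decide) (by decide) (by decide) (by decide)
    (by decide) (by decide) (by decide) (by decide) (by decide)
  have key := hBR'.2.2.2.2.2.2.2.2.1
  have ha := hasym 1 0
  linarith [hapos 2 3, hlpos 0, hlpos 1]
end

section
/- Let d, m_1,…,m_5, m_{ij} = m_{ji} (1 ≤ i < j ≤ 5) be integers satisfying the boundary-restriction inequalities, with d > 0, with m_5 ≤ m_i for i ≤ 4, and such that if m_1 = m_2 = m_3 = m_4 = m_5 then some m_{i5} (i ≤ 4) equals max{m_{ab} : 1 ≤ a < b ≤ 5}. Define χ(13)=χ(24)=x, χ(14)=χ(23)=y, χ(12)=χ(34)=z; D·L_x := d − m_5 − m_{13} − m_{24}, D·L_y := d − m_5 − m_{14} − m_{23}, D·L_z := d − m_5 − m_{12} − m_{34}; m_α := max(0, −D·L_α) for α ∈ {x,y,z}. Let a_{ij}, l_i, c_x, c_y, c_z, l_x, l_y, l_z be nonnegative integers with Σ_{1≤i<j≤4} a_{ij} + c_x + c_y + c_z = m_5; a_{ij} + a_{ik} + a_{il} − l_i = m_{i5} for each i ≤ 4; and a_{ij} + a_{kl} +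 Σ_{α≠χ(ij)} c_α − l_{χ(ij)} = m_{χ(ij)} for each partition {i,j} ∪ {k,l} = {1,2,3,4}. Then it is not possible that c_α − l_α ≥ m_α + D·L_α for all three α ∈ {x,y,z}; that is, there exists α with c_α − l_α < m_α + D·L_α. -/
open Finset

theorem stmt13 (d : ℤ) (m : Fin 5 → ℤ) (mm : Fin 5 → Fin 5 → ℤ)
    (hsym : ∀ i j, mm i j = mm j i) (hBR : BR d m mm)
    (hd : 0 < d)
    (hm5 : ∀ p : Fin 5, p ≠ 4 → m 4 ≤ m p)
    (hnorm : (m 0 = m 4 ∧ m 1 = m 4 ∧ m 2 = m 4 ∧ m 3 = m 4) →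
      ∃ i : Fin 5, i ≠ 4 ∧ ∀ p q : Fin 5, p ≠ q → mm p q ≤ mm i 4)
    (a : Fin 5 → Fin 5 → ℤ) (ll : Fin 5 → ℤ) (cx cy cz lx ly lz : ℤ)
    (hasym : ∀ p q, a p q = a q p)
    (hapos : ∀ p q, 0 ≤ a p q) (hlpos : ∀ p, 0 ≤ ll p)
    (hcx : 0 ≤ cx) (hcy : 0 ≤ cy) (hcz : 0 ≤ cz)
    (hlx : 0 ≤ lx) (hly : 0 ≤ ly) (hlz : 0 ≤ lz)
    (hsum : a 0 1 + a 0 2 + a 0 3 + a 1 2 + a 1 3 + a 2 3 + cx + cy + cz = m 4)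
    (hrel : ∀ p q r s : Fin 5, p ≠ q → p ≠ r → p ≠ s → q ≠ r → q ≠ s → r ≠ s →
      p ≠ 4 → q ≠ 4 → r ≠ 4 → s ≠ 4 → a p q + a p r + a p s - ll p = mm p 4)
    (hmx : a 0 2 + a 1 3 + cy + cz - lx = max 0 (-(d - m 4 - mm 0 2 - mm 1 3)))
    (hmy : a 0 3 + a 1 2 + cx + cz - ly = max 0 (-(d - m 4 - mm 0 3 - mm 1 2)))
    (hmz : a 0 1 + a 2 3 + cx + cy - lz = max 0 (-(d - m 4 - mm 0 1 - mm 2 3)))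
    :
    cx - lx < max 0 (-(d - m 4 - mm 0 2 - mm 1 3)) + (d - m 4 - mm 0 2 - mm 1 3) ∨
    cy - ly < max 0 (-(d - m 4 - mm 0 3 - mm 1 2)) + (d - m 4 - mm 0 3 - mm 1 2) ∨
    cz - lz < max 0 (-(d - m 4 - mm 0 1 - mm 2 3)) + (d - m 4 - mm 0 1 - mm 2 3) := by
  by_contra hcon
  push_neg at hcon
  obtain ⟨hx, hy, hz⟩ := hcon
  have h7a := (hBR 0 1 2 3 4 (by decide) (by decide) (by decide) (by decide) (by decide) (by decide) (by decide) (by decide) (by decide) (by decide)).2.2.2.2.2.2.1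
  have h7b := (hBR 0 1 3 2 4 (by decide) (by decide) (by decide) (by decide) (by decide) (by decide) (by decide) (by decide) (by decide) (by decide)).2.2.2.2.2.2.1
  have h7c := (hBR 0 2 3 1 4 (by decide) (by decide) (by decide) (by decide) (by decide) (by decide) (by decide) (by decide) (by decide) (by decide)).2.2.2.2.2.2.1
  have h7d := (hBR 1 2 3 0 4 (by decide) (by decide) (by decide) (by decide) (by decide) (by decide) (by decide) (by decide) (by decide) (by decide)).2.2.2.2.2.2.1
  have h5a := (hBR 0 4 1 2 3 (by decide) (by decide) (by decide) (by decide) (by decide) (by decide) (by decide) (by decide) (by decide) (by decide)).2.2.2.2.1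
  have h5b := (hBR 1 4 0 2 3 (by decide) (by decide) (by decide) (by decide) (by decide) (by decide) (by decide) (by decide) (by decide) (by decide)).2.2.2.2.1
  have h5c := (hBR 2 4 0 1 3 (by decide) (by decide) (by decide) (by decide) (by decide) (by decide) (by decide) (by decide) (by decide) (by decide)).2.2.2.2.1
  have h5d := (hBR 3 4 0 1 2 (by decide) (by decide) (by decide) (by decide) (by decide) (by decide) (by decide) (by decide) (by decide) (by decide)).2.2.2.2.1
  have h4b := (hBR 1 4 0 2 3 (by decide) (by decide) (by decide) (by decide) (by decide) (by decide) (by decide) (by decide) (by decide) (by decide)).2.2.2.1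
  have h4c := (hBR 2 4 0 1 3 (by decide) (by decide) (by decide) (by decide) (by decide) (by decide) (by decide) (by decide) (by decide) (by decide)).2.2.2.1
  have h4d := (hBR 3 4 0 1 2 (by decide) (by decide) (by decide) (by decide) (by decide) (by decide) (by decide) (by decide) (by decide) (by decide)).2.2.2.1
  have h8a := (hBR 1 2 4 0 3 (by decide) (by decide) (by decide) (by decide) (by decide) (by decide) (by decide) (by decide) (by decide) (by decide)).2.2.2.2.2.2.2.1
  have h8b := (hBR 1 3 4 0 2 (by decide) (by decide) (by decide) (by decide) (by decide) (by decide) (by decide) (by decide) (by decide) (by decide)).2.2.2.2.2.2.2.1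
  have h8c := (hBR 0 2 4 1 3 (by decide) (by decide) (by decide) (by decide) (by decide) (by decide) (by decide) (by decide) (by decide) (by decide)).2.2.2.2.2.2.2.1
  have h8d := (hBR 0 3 4 1 2 (by decide) (by decide) (by decide) (by decide) (by decide) (by decide) (by decide) (by decide) (by decide) (by decide)).2.2.2.2.2.2.2.1
  have h8e := (hBR 0 1 4 2 3 (by decide) (by decide) (by decide) (by decide) (by decide) (by decide) (by decide) (by decide) (by decide) (by decide)).2.2.2.2.2.2.2.1
  have hrow0 := (hBR 0 1 2 3 4 (by decide) (by decide) (by decide) (by decide) (by decide) (by decide) (by decide) (by decide) (by decide) (by decide)).2.2.1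
  have hrow1 := (hBR 1 0 2 3 4 (by decide) (by decide) (by decide) (by decide) (by decide) (by decide) (by decide) (by decide) (by decide) (by decide)).2.2.1
  have hrow2 := (hBR 2 0 1 3 4 (by decide) (by decide) (by decide) (by decide) (by decide) (by decide) (by decide) (by decide) (by decide) (by decide)).2.2.1
  have hrow3 := (hBR 3 0 1 2 4 (by decide) (by decide) (by decide) (by decide) (by decide) (by decide) (by decide) (by decide) (by decide) (by decide)).2.2.1

  simp only [Finset.sum_filter, Fin.sum_univ_five] at hrow0 hrow1 hrow2 hrow3
  norm_num at hrow0 hrow1 hrow2 hrow3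
  rw [hsym 1 0] at hrow1
  rw [hsym 2 0, hsym 2 1] at hrow2
  rw [hsym 3 0, hsym 3 1, hsym 3 2] at hrow3
  have hm50 := hm5 0 (by decide)
  have hm51 := hm5 1 (by decide)
  have hm52 := hm5 2 (by decide)
  have hm53 := hm5 3 (by decide)
  by_cases hall : m 0 = m 4 ∧ m 1 = m 4 ∧ m 2 = m 4 ∧ m 3 = m 4
  · obtain ⟨i, hi4, hmax⟩ := hnorm hall
    obtain ⟨he0, he1, he2, he3⟩ := hall
    have hi : ∀ j : Fin 5, j ≠ 4 → j = 0 ∨ j = 1 ∨ j = 2 ∨ j = 3 := by decide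
    rcases hi i hi4 with h | h | h | h <;> subst h
    · have hx1 := hmax 0 1 (by decide)
      have hx2 := hmax 0 3 (by decide)
      linarith [hrow0, h7d, h8a, h8c, hd, hm51, hm52, hm53, hsum, hmx, hmy, hmz, hx, hy, hz, hx1, hx2, he0]
    · have hx1 := hmax 0 1 (by decide)
      have hx2 := hmax 1 2 (by decide)
      linarith [hrow1, h7c, h8c, h8d, hd, hm50, hm52, hm53, hsum, hmx, hmy, hmz, hx, hy, hz, hx1, hx2, he1]
    · have hx1 := hmax 0 2 (by decide)
      have hx2 := hmax 1 2 (by decide)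
      linarith [hrow2, h7b, h8e, h8d, hd, hm50, hm51, hm53, hsum, hmx, hmy, hmz, hx, hy, hz, hx1, hx2, he2]
    · have hx1 := hmax 0 3 (by decide)
      have hx2 := hmax 1 3 (by decide)
      linarith [hrow3, h7a, h8e, h8c, hd, hm50, hm51, hm52, hsum, hmx, hmy, hmz, hx, hy, hz, hx1, hx2, he3]
  · have hsome : m 4 < m 0 ∨ m 4 < m 1 ∨ m 4 < m 2 ∨ m 4 < m 3 := by
      by_contra hno
      push_neg at hno
      obtain ⟨n0, n1, n2, n3⟩ := hno
      exact hall ⟨le_antisymm n0 hm50, le_antisymm n1 hm51, le_antisymm n2 hm52,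
        le_antisymm n3 hm53⟩
    rcases hsome with h | h | h | h <;>
      linarith [h7a, h7b, h7c, h7d, h5a, h5b, h5c, h5d, h4b, h4c, h4d, hm50, hm51, hm52, hm53,
        hsum, hmx, hmy, hmz, hx, hy, hz, h]
end

section
/- Let d, m_1,…,m_4 and m_{ij} = m_{ji} (1 ≤ i < j ≤ 4) be integers such that for every {i,j,k,l} = {1,2,3,4}: d ≥ 0; d ≥ m_i; d ≥ m_{ij}; d ≥ m_{ij}+m_{kl}; 2d ≥ m_{ij}+m_k+m_l; 2d ≥ m_{ik}+m_{il}+m_j; 2d ≥ m_{ij}+m_{ik}+m_{il}; 3d ≥ m_1+m_2+m_3+m_4; 3d ≥ 2m_i+m_{jk}+m_{jl}+m_{kl}; and suppose in addition that m_a < d and m_{ab} < d for all a, b ∈ {1,2,3,4}. Then there are at least three indices i ∈ {1,2,3,4} such that for every j ≠ i one has 2d − m_{ia} − m_{ib} − m_j > 0, where {a,b} = {1,2,3,4}∖{i,j}. -/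
open Finset

/-- The nine families of inequalities `D·C ≥ 0` for the nef curve classes `l`, `l-e_i`,
`l-e_{ij}`, `l-e_{ij}-e_{kl}`, `C_{ij}`, `C_{i;j}`, `C_i`, `B`, `B_i` on `X`. -/
def XIneqs (d : ℤ) (m : Fin 4 → ℤ) (mm : Fin 4 → Fin 4 → ℤ) : Prop :=
  ∀ i j k l : Fin 4, i ≠ j → i ≠ k → i ≠ l → j ≠ k → j ≠ l → k ≠ l →
    0 ≤ d ∧ m i ≤ d ∧ mm i j ≤ d ∧ mm i j + mm k l ≤ d ∧
    mm i j + m k + m l ≤ 2 * d ∧ mm i k + mm i l + m j ≤ 2 * d ∧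
    mm i j + mm i k + mm i l ≤ 2 * d ∧ m i + m j + m k + m l ≤ 3 * d ∧
    2 * m i + mm j k + mm j l + mm k l ≤ 3 * d

private lemma elem4 : ∀ i j a b x : Fin 4, i ≠ j → i ≠ a → i ≠ b → j ≠ a → j ≠ b → a ≠ b →
    x = i ∨ x = j ∨ x = a ∨ x = b := by decide

private lemma key (d : ℤ) (m : Fin 4 → ℤ) (mm : Fin 4 → Fin 4 → ℤ)
    (hsym : ∀ i j, mm i j = mm j i) (hX : XIneqs d m mm)
    (hm : ∀ p, m p < d) (hmm : ∀ p q, p ≠ q → mm p q < d)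
    (i j a b i2 j2 p2 q2 : Fin 4)
    (nij : i ≠ j) (nia : i ≠ a) (nib : i ≠ b) (nja : j ≠ a) (njb : j ≠ b) (nab : a ≠ b)
    (m1 : i2 ≠ j2) (m2 : i2 ≠ p2) (m3 : i2 ≠ q2) (m4 : j2 ≠ p2) (m5 : j2 ≠ q2) (m6 : p2 ≠ q2)
    (hne : i ≠ i2)
    (e1 : 2 * d - mm i a - mm i b - m j ≤ 0)
    (e2 : 2 * d - mm i2 p2 - mm i2 q2 - m j2 ≤ 0) : False := by
  have nji := (nij).symm
  have nai := (nia).symm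
  have nbi := (nib).symm
  have naj := (nja).symm
  have nbj := (njb).symm
  have nba := (nab).symm
  have H0 := hX i j a b nij nia nib nja njb nab
  have H1 := hX i j b a nij nib nia njb nja nba
  have H2 := hX i a j b nia nij nib naj nab njb
  have H3 := hX i a b j nia nib nij nab naj nbj
  have H4 := hX i b j a nib nij nia nbj nba nja
  have H5 := hX i b a j nib nia nij nba nbj naj
  have H6 := hX j i a b nji nja njb nia nib nab
  have H7 := hX j i b a nji njb nja nib nia nba
  have H8 := hX j a i b nja nji njb nai nab nib
  have H9 := hX j a b i nja njb nji nab nai nbi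
  have H10 := hX j b i a njb nji nja nbi nba nia
  have H11 := hX j b a i njb nja nji nba nbi nai
  have H12 := hX a i j b nai naj nab nij nib njb
  have H13 := hX a i b j nai nab naj nib nij nbj
  have H14 := hX a j i b naj nai nab nji njb nib
  have H15 := hX a j b i naj nab nai njb nji nbi
  have H16 := hX a b i j nab nai naj nbi nbj nij
  have H17 := hX a b j i nab naj nai nbj nbi nji
  have H18 := hX b i j a nbi nbj nba nij nia nja
  have H19 := hX b i a j nbi nba nbj nia nij naj
  have H20 := hX b j i a nbj nbi nba nji nja nia
  have H21 := hX b j a i nbj nba nbi nja nji nai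
  have H22 := hX b a i j nba nbi nbj nai naj nij
  have H23 := hX b a j i nba nbj nbi naj nai nji

  have Mij := hmm i j nij
  have Mia := hmm i a nia
  have Mib := hmm i b nib
  have Mji := hmm j i nji
  have Mja := hmm j a nja
  have Mjb := hmm j b njb
  have Mai := hmm a i nai
  have Maj := hmm a j naj
  have Mab := hmm a b nab
  have Mbi := hmm b i nbi
  have Mbj := hmm b j nbj
  have Mba := hmm b a nba
  have Sij := hsym i j
  have Sia := hsym i a
  have Sib := hsym i b
  have Sji := hsym j i
  have Sja := hsym j a
  have Sjb := hsym j b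
  have Sai := hsym a i
  have Saj := hsym a j
  have Sab := hsym a b
  have Sbi := hsym b i
  have Sbj := hsym b j
  have Sba := hsym b a
  have Mi := hm i
  have Mj := hm j
  have Ma := hm a
  have Mb := hm b
  have Di := elem4 i j a b i2 nij nia nib nja njb nab
  have Dj := elem4 i j a b j2 nij nia nib nja njb nab
  have Dp := elem4 i j a b p2 nij nia nib nja njb nab
  have Dq := elem4 i j a b q2 nij nia nib nja njb nab
  rcases Di with rfl | rfl | rfl | rfl
  · exact hne rfl
  all_goals rcases Dj with rfl | rfl | rfl | rfl <;>
    rcases Dp with rfl | rfl | rfl | rfl <;>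
    rcases Dq with rfl | rfl | rfl | rfl <;>
    first
      | exact absurd rfl (by assumption)
      | omega

theorem stmt16 (d : ℤ) (m : Fin 4 → ℤ) (mm : Fin 4 → Fin 4 → ℤ)
    (hsym : ∀ i j, mm i j = mm j i)
    (hX : XIneqs d m mm)
    (hm : ∀ p, m p < d) (hmm : ∀ p q, p ≠ q → mm p q < d) :
    ∃ s : Finset (Fin 4), 3 ≤ s.card ∧
      ∀ i ∈ s, ∀ j p q : Fin 4,
        i ≠ j → i ≠ p → i ≠ q → j ≠ p → j ≠ q → p ≠ q →
        0 < 2 * d - mm i p - mm i q - m j := by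
  classical
  set Bad : Fin 4 → Prop := fun i => ∃ j p q : Fin 4,
    i ≠ j ∧ i ≠ p ∧ i ≠ q ∧ j ≠ p ∧ j ≠ q ∧ p ≠ q ∧
    2 * d - mm i p - mm i q - m j ≤ 0 with hBad
  have hsub : ∀ i1 i2, Bad i1 → Bad i2 → i1 = i2 := by
    intro i1 i2 h1 h2
    by_contra hne
    obtain ⟨j1, p1, q1, a1, a2, a3, a4, a5, a6, e1⟩ := h1
    obtain ⟨j2, p2, q2, b1, b2, b3, b4, b5, b6, e2⟩ := h2
    exact key d m mm hsym hX hm hmm i1 j1 p1 q1 i2 j2 p2 q2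
      a1 a2 a3 a4 a5 a6 b1 b2 b3 b4 b5 b6 hne e1 e2
  refine ⟨univ.filter (fun i => ¬ Bad i), ?_, ?_⟩
  · have hcard : (univ.filter Bad).card + (univ.filter (fun i => ¬ Bad i)).card
        = (univ : Finset (Fin 4)).card := Finset.card_filter_add_card_filter_not _
    have h1 : (univ.filter Bad).card ≤ 1 := by
      apply Finset.card_le_one.mpr
      intro x hx y hy
      simp only [mem_filter] at hx hy
      exact hsub x y hx.2 hy.2
    simp only [Finset.card_univ, Fintype.card_fin] at hcard
    omega
  · intro i hi j p q h1 h2 h3 h4 h5 h6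
    simp only [mem_filter] at hi
    by_contra hlt
    exact hi.2 ⟨j, p, q, h1, h2, h3, h4, h5, h6, by omega⟩
end

section
/- Let d, m_1,…,m_4 and m_{ij} = m_{ji} (1 ≤ i < j ≤ 4) be integers such that for every {i,j,k,l} = {1,2,3,4}: d ≥ 0; d ≥ m_i; d ≥ m_{ij}; d ≥ m_{ij}+m_{kl}; 2d ≥ m_{ij}+m_k+m_l; 2d ≥ m_{ik}+m_{il}+m_j; 2d ≥ m_{ij}+m_{ik}+m_{il}; 3d ≥ m_1+m_2+m_3+m_4; 3d ≥ 2m_i+m_{jk}+m_{jl}+m_{kl}; with d > m_{ij}+m_{kl} for at least one partition {i,j} ∪ {k,l} = {1,2,3,4}. Suppose in addition d > 0, m_{12} = d, m_3 < d, m_4 < d, and m_{13} ≥ m_{14}, m_{13} ≥ m_{23}, m_{13} ≥ m_{24}. Then the data d' := d−1, m'_1 := m_1−1, m'_2 := m_2−1, m'_3 := m_3−1, m'_4 := m_4, m'_{12} := m_{12}−1, m'_{13} := m_{13}−1, m'_{23} := m_{23}−1, and m'_{ab} := m_{ab} for ab ∈ {14, 24, 34}, again satisfies all nine inequality families above, and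 still satisfies d' > m'_{ij}+m'_{kl} for at least one partition. -/
set_option maxHeartbeats 1000000


open Finset

theorem stmt19 (d : ℤ) (m : Fin 4 → ℤ) (mm : Fin 4 → Fin 4 → ℤ)
    (hsym : ∀ i j, mm i j = mm j i)
    (hX : XIneqs d m mm)
    (hstrict : ∃ i j k l : Fin 4, i ≠ j ∧ i ≠ k ∧ i ≠ l ∧ j ≠ k ∧ j ≠ l ∧ k ≠ l ∧
      mm i j + mm k l < d)
    (hd : 0 < d) (h12 : mm 0 1 = d) (hm3 : m 2 < d) (hm4 : m 3 < d)
    (h1314 : mm 0 3 ≤ mm 0 2) (h1323 : mm 1 2 ≤ mm 0 2) (h1324 : mm 1 3 ≤ mm 0 2) :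
    XIneqs (d - 1) (fun p => if p = 3 then m p else m p - 1)
      (fun p q => if p ≠ 3 ∧ q ≠ 3 then mm p q - 1 else mm p q) ∧
    ∃ i j k l : Fin 4, i ≠ j ∧ i ≠ k ∧ i ≠ l ∧ j ≠ k ∧ j ≠ l ∧ k ≠ l ∧
      (if i ≠ 3 ∧ j ≠ 3 then mm i j - 1 else mm i j)
        + (if k ≠ 3 ∧ l ≠ 3 then mm k l - 1 else mm k l) < d - 1 := by
  obtain ⟨i, j, k, l, hij, hik, hil, hjk, hjl, hkl, hst⟩ := hstrict
  have H0123 := hX 0 1 2 3 (by decide) (by decide) (by decide) (by decide) (by decide) (by decide)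
  have H0132 := hX 0 1 3 2 (by decide) (by decide) (by decide) (by decide) (by decide) (by decide)
  have H0213 := hX 0 2 1 3 (by decide) (by decide) (by decide) (by decide) (by decide) (by decide)
  have H0231 := hX 0 2 3 1 (by decide) (by decide) (by decide) (by decide) (by decide) (by decide)
  have H0312 := hX 0 3 1 2 (by decide) (by decide) (by decide) (by decide) (by decide) (by decide)
  have H0321 := hX 0 3 2 1 (by decide) (by decide) (by decide) (by decide) (by decide) (by decide)
  have H1023 := hX 1 0 2 3 (by decide) (by decide) (by decide) (by decide) (by decide) (by decide)
  have H1032 := hX 1 0 3 2 (by decide) (by decide) (by decide) (by decide) (by decide) (by decide)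
  have H1203 := hX 1 2 0 3 (by decide) (by decide) (by decide) (by decide) (by decide) (by decide)
  have H1230 := hX 1 2 3 0 (by decide) (by decide) (by decide) (by decide) (by decide) (by decide)
  have H1302 := hX 1 3 0 2 (by decide) (by decide) (by decide) (by decide) (by decide) (by decide)
  have H1320 := hX 1 3 2 0 (by decide) (by decide) (by decide) (by decide) (by decide) (by decide)
  have H2013 := hX 2 0 1 3 (by decide) (by decide) (by decide) (by decide) (by decide) (by decide)
  have H2031 := hX 2 0 3 1 (by decide) (by decide) (by decide) (by decide) (by decide) (by decide)
  have H2103 := hX 2 1 0 3 (by decide) (by decide) (by decide) (by decide) (by decide) (by decide)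
  have H2130 := hX 2 1 3 0 (by decide) (by decide) (by decide) (by decide) (by decide) (by decide)
  have H2301 := hX 2 3 0 1 (by decide) (by decide) (by decide) (by decide) (by decide) (by decide)
  have H2310 := hX 2 3 1 0 (by decide) (by decide) (by decide) (by decide) (by decide) (by decide)
  have H3012 := hX 3 0 1 2 (by decide) (by decide) (by decide) (by decide) (by decide) (by decide)
  have H3021 := hX 3 0 2 1 (by decide) (by decide) (by decide) (by decide) (by decide) (by decide)
  have H3102 := hX 3 1 0 2 (by decide) (by decide) (by decide) (by decide) (by decide) (by decide)
  have H3120 := hX 3 1 2 0 (by decide) (by decide) (by decide) (by decide) (by decide) (by decide)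
  have H3201 := hX 3 2 0 1 (by decide) (by decide) (by decide) (by decide) (by decide) (by decide)
  have H3210 := hX 3 2 1 0 (by decide) (by decide) (by decide) (by decide) (by decide) (by decide)
  have S01 := hsym 1 0
  have S02 := hsym 2 0
  have S03 := hsym 3 0
  have S12 := hsym 2 1
  have S13 := hsym 3 1
  have S23 := hsym 3 2
  constructor
  · intro a b c e hab hac hae hbc hbe hce
    have F4 : ∀ x : Fin 4, x = 0 ∨ x = 1 ∨ x = 2 ∨ x = 3 := by decide
    rcases F4 a with rfl|rfl|rfl|rfl <;> rcases F4 b with rfl|rfl|rfl|rfl <;>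
      rcases F4 c with rfl|rfl|rfl|rfl <;> rcases F4 e with rfl|rfl|rfl|rfl <;>
      simp only [ne_eq, Fin.reduceEq, not_false_eq_true, not_true_eq_false, and_self,
        and_true, true_and, and_false, false_and, reduceIte] at hab hac hae hbc hbe hce ⊢ <;>
      omega
  · refine ⟨i, j, k, l, hij, hik, hil, hjk, hjl, hkl, ?_⟩
    have F4 : ∀ x : Fin 4, x = 0 ∨ x = 1 ∨ x = 2 ∨ x = 3 := by decide
    rcases F4 i with rfl|rfl|rfl|rfl <;> rcases F4 j with rfl|rfl|rfl|rfl <;>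
      rcases F4 k with rfl|rfl|rfl|rfl <;> rcases F4 l with rfl|rfl|rfl|rfl <;>
      simp only [ne_eq, Fin.reduceEq, not_false_eq_true, not_true_eq_false, and_self,
        and_true, true_and, and_false, false_and, reduceIte] at hij hik hil hjk hjl hkl hst ⊢ <;>
      omega
end
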